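/- arXiv:1112.0805 — 3 statements merged into one kernel-verified Lean document; each statement's English description precedes it below -/
import Mathlib

section
/- Let M ≥ 1 and let C : Fin M × Fin M → S be a mapping function of the form C(s₁, s₂) = f((s₁ + s₂) as an integer), where f : Fin (2M-1) → S is defined on the superposed constellation indices 0,...,2M-2. Then C satisfies the Exclusive Law (i.e., C(s₁', s₂) ≠ C(s₁, s₂) whenever s₁' ≠ s₁, and C(s₁, s₂') ≠ C(s₁, s₂) whenever s₂' ≠ s₂) if and only if f maps any M consecutive indices to pairwise distinct values, i.e., for all j, j' with 0 ≤ j < j' ≤ 2M-2 and j' - j ≤ M - 1, we have f(j) ≠ f(j'). -/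
/-- Proposition 1: for M-PAM, a mapping C(s₁,s₂) = f(s₁+s₂) on the superposed
constellation satisfies the Exclusive Law iff f maps any M consecutive indices
to pairwise distinct values. -/
theorem stmt_0 (M : ℕ) (hM : 1 ≤ M) (S : Type) (f : Fin (2 * M - 1) → S)
    (C : Fin M → Fin M → S)
    (hC : ∀ s₁ s₂ : Fin M, C s₁ s₂ = f ⟨s₁.val + s₂.val, by omega⟩) :
    ((∀ s₁ s₁' s₂ : Fin M, s₁' ≠ s₁ → C s₁' s₂ ≠ C s₁ s₂) ∧
      (∀ s₁ s₂ s₂' : Fin M, s₂' ≠ s₂ → C s₁ s₂' ≠ C s₁ s₂)) ↔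
    (∀ j j' : Fin (2 * M - 1), j.val < j'.val → j'.val - j.val ≤ M - 1 → f j ≠ f j') := by
  constructor
  · rintro ⟨h1, _⟩ j j' hlt hle heq
    have hj : j.val < 2 * M - 1 := j.isLt
    have hj' : j'.val < 2 * M - 1 := j'.isLt
    set s₁v : ℕ := j.val - (M - 1) with hs₁v
    set s₂v : ℕ := j.val - s₁v with hs₂v
    set s₁'v : ℕ := j'.val - s₂v with hs₁'v
    have hb1 : s₁v < M := by omega
    have hb2 : s₂v < M := by omega
    have hb3 : s₁'v < M := by omega
    have key := h1 ⟨s₁v, hb1⟩ ⟨s₁'v, hb3⟩ ⟨s₂v, hb2⟩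
      (by rw [Ne, Fin.ext_iff]; simp only; omega)
    apply key
    rw [hC, hC]
    have e1 : (⟨s₁'v + s₂v, by omega⟩ : Fin (2 * M - 1)) = j' :=
      Fin.ext (by simp only; omega)
    have e2 : (⟨s₁v + s₂v, by omega⟩ : Fin (2 * M - 1)) = j :=
      Fin.ext (by simp only; omega)
    rw [e1, e2, heq]
  · rintro h
    constructor
    · intro s₁ s₁' s₂ hne heq
      rw [hC, hC] at heq
      have hv : s₁'.val ≠ s₁.val := fun hv => hne (Fin.ext hv)
      have h1 := s₁.isLt; have h2 := s₁'.isLt; have h3 := s₂.isLt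
      rcases Nat.lt_or_ge s₁'.val s₁.val with hlt | hge
      · exact h ⟨s₁'.val + s₂.val, by omega⟩ ⟨s₁.val + s₂.val, by omega⟩
          (by simp only; omega) (by simp only; omega) heq
      · exact h ⟨s₁.val + s₂.val, by omega⟩ ⟨s₁'.val + s₂.val, by omega⟩
          (by simp only; omega) (by simp only; omega) heq.symm
    · intro s₁ s₂ s₂' hne heq
      rw [hC, hC] at heq
      have hv : s₂'.val ≠ s₂.val := fun hv => hne (Fin.ext hv)
      have h1 := s₁.isLt; have h2 := s₂'.isLt; have h3 := s₂.isLt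
      rcases Nat.lt_or_ge s₂'.val s₂.val with hlt | hge
      · exact h ⟨s₁.val + s₂'.val, by omega⟩ ⟨s₁.val + s₂.val, by omega⟩
          (by simp only; omega) (by simp only; omega) heq
      · exact h ⟨s₁.val + s₂.val, by omega⟩ ⟨s₁.val + s₂'.val, by omega⟩
          (by simp only; omega) (by simp only; omega) heq.symm
end

section
/- Let L ≥ 1 and M = L². Let C : (Fin L × Fin L) × (Fin L × Fin L) → S be given by C((k₁,k₁'),(k₂,k₂')) = f(k₁+k₂, k₁'+k₂') for some f defined on {0,...,2L-2}². Then C satisfies the Exclusive Law if and only if f is injective on every L×L square of consecutive indices, i.e., for every (a,b), the restriction of f to {a,...,a+L-1} × {b,...,b+L-1} (intersected with the domain) is injective. -/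
/-- Corollary 1: for square M-QAM (M = L²), C((k₁,k₁'),(k₂,k₂')) =
f(k₁+k₂, k₁'+k₂') satisfies the Exclusive Law iff f is injective on every
L×L square of consecutive indices (intersected with the domain {0,...,2L-2}²). -/
theorem stmt_6 (L : ℕ) (hL : 1 ≤ L) (M : ℕ) (hM : M = L ^ 2) (S : Type)
    (f : ℕ → ℕ → S)
    (C : (Fin L × Fin L) → (Fin L × Fin L) → S)
    (hC : ∀ p q : Fin L × Fin L, C p q = f (p.1.val + q.1.val) (p.2.val + q.2.val)) :
    ((∀ q : Fin L × Fin L, Function.Injective (fun p => C p q)) ∧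
      (∀ p : Fin L × Fin L, Function.Injective (fun q => C p q))) ↔
    (∀ a b x₁ y₁ x₂ y₂ : ℕ,
      x₁ ≤ 2 * L - 2 → y₁ ≤ 2 * L - 2 → x₂ ≤ 2 * L - 2 → y₂ ≤ 2 * L - 2 →
      a ≤ x₁ → x₁ ≤ a + L - 1 → a ≤ x₂ → x₂ ≤ a + L - 1 →
      b ≤ y₁ → y₁ ≤ b + L - 1 → b ≤ y₂ → y₂ ≤ b + L - 1 →
      f x₁ y₁ = f x₂ y₂ → (x₁, y₁) = (x₂, y₂)) := by
  constructor
  · rintro ⟨h1, _⟩ a b x₁ y₁ x₂ y₂ hx₁ hy₁ hx₂ hy₂ hax₁ hx₁a hax₂ hx₂a hby₁ hy₁b hby₂ hy₂b hf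
    set q₁ := min a (L - 1) with hq₁
    set q₂ := min b (L - 1) with hq₂
    have hq₁L : q₁ < L := lt_of_le_of_lt (min_le_right _ _) (Nat.sub_lt hL one_pos)
    have hq₂L : q₂ < L := lt_of_le_of_lt (min_le_right _ _) (Nat.sub_lt hL one_pos)
    have key : ∀ x : ℕ, x ≤ 2 * L - 2 → a ≤ x → x ≤ a + L - 1 → x - q₁ < L ∧ q₁ + (x - q₁) = x := by
      intro x hx hax hxa
      constructor
      · rcases le_or_gt a (L - 1) with h | h
        · have : q₁ = a := min_eq_left h
          rw [this]
          have : x - a ≤ L - 1 := by omega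
          omega
        · have : q₁ = L - 1 := min_eq_right (le_of_lt h)
          omega
      · omega
    have key' : ∀ y : ℕ, y ≤ 2 * L - 2 → b ≤ y → y ≤ b + L - 1 → y - q₂ < L ∧ q₂ + (y - q₂) = y := by
      intro y hy hby hyb
      constructor
      · rcases le_or_gt b (L - 1) with h | h
        · have : q₂ = b := min_eq_left h
          rw [this]
          have : y - b ≤ L - 1 := by omega
          omega
        · have : q₂ = L - 1 := min_eq_right (le_of_lt h)
          omega
      · omega
    obtain ⟨hp1, he1⟩ := key x₁ hx₁ hax₁ hx₁a
    obtain ⟨hp2, he2⟩ := key x₂ hx₂ hax₂ hx₂a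
    obtain ⟨hr1, he3⟩ := key' y₁ hy₁ hby₁ hy₁b
    obtain ⟨hr2, he4⟩ := key' y₂ hy₂ hby₂ hy₂b
    have := h1 (⟨q₁, hq₁L⟩, ⟨q₂, hq₂L⟩)
      (a₁ := (⟨x₁ - q₁, hp1⟩, ⟨y₁ - q₂, hr1⟩)) (a₂ := (⟨x₂ - q₁, hp2⟩, ⟨y₂ - q₂, hr2⟩))
    simp only [hC] at this
    have heq := this (by rw [show x₁ - q₁ + q₁ = x₁ by omega,
      show y₁ - q₂ + q₂ = y₁ by omega, show x₂ - q₁ + q₁ = x₂ by omega,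
      show y₂ - q₂ + q₂ = y₂ by omega]; exact hf)
    have h1' : x₁ - q₁ = x₂ - q₁ := congrArg Fin.val (congrArg Prod.fst heq)
    have h2' : y₁ - q₂ = y₂ - q₂ := congrArg Fin.val (congrArg Prod.snd heq)
    have : x₁ = x₂ := by omega
    have : y₁ = y₂ := by omega
    simp_all
  · intro h
    constructor
    · intro q p₁ p₂ hf
      simp only [hC] at hf
      have := h q.1.val q.2.val (p₁.1.val + q.1.val) (p₁.2.val + q.2.val)
        (p₂.1.val + q.1.val) (p₂.2.val + q.2.val)
        (by have := p₁.1.isLt; have := q.1.isLt; omega)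
        (by have := p₁.2.isLt; have := q.2.isLt; omega)
        (by have := p₂.1.isLt; have := q.1.isLt; omega)
        (by have := p₂.2.isLt; have := q.2.isLt; omega)
        (by omega) (by have := p₁.1.isLt; omega)
        (by omega) (by have := p₂.1.isLt; omega)
        (by omega) (by have := p₁.2.isLt; omega)
        (by omega) (by have := p₂.2.isLt; omega) hf
      have h1' := congrArg Prod.fst this
      have h2' := congrArg Prod.snd this
      
      ext
      · omega
      · omega
    · intro p q₁ q₂ hf
      simp only [hC] at hf
      have := h p.1.val p.2.val (p.1.val + q₁.1.val) (p.2.val + q₁.2.val)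
        (p.1.val + q₂.1.val) (p.2.val + q₂.2.val)
        (by have := q₁.1.isLt; have := p.1.isLt; omega)
        (by have := q₁.2.isLt; have := p.2.isLt; omega)
        (by have := q₂.1.isLt; have := p.1.isLt; omega)
        (by have := q₂.2.isLt; have := p.2.isLt; omega)
        (by omega) (by have := q₁.1.isLt; omega)
        (by omega) (by have := q₂.1.isLt; omega)
        (by omega) (by have := q₁.2.isLt; omega)
        (by omega) (by have := q₂.2.isLt; omega) hf
      have h1' := congrArg Prod.fst this
      have h2' := congrArg Prod.snd this
      
      ext
      · omega
      · omega
end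

section
/- Let L' ≥ 1 and let A ⊆ {0,...,L'-1} × {0,...,L'-1} be any nonempty subset (a possibly non-square constellation). Let C : A × A → S be given by C(p, q) = f(p + q) where addition is componentwise and f is defined on the sumset A + A. If f is injective on every L'×L' square of consecutive index pairs (i.e., on every set of the form ({a,...,a+L'-1} × {b,...,b+L'-1}) ∩ (A+A)), then C satisfies the Exclusive Law: C(p', q) ≠ C(p, q) for p' ≠ p, and C(p, q') ≠ C(p, q) for q' ≠ q. -/
/-- Corollary 2 (sufficiency): for a possibly non-square constellation
A ⊆ {0,...,L'-1}², if f is injective on every L'×L' square of consecutive index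
pairs intersected with the sumset A + A, then C(p,q) = f(p+q) satisfies the
Exclusive Law. -/
theorem stmt_8 (L' : ℕ) (hL' : 1 ≤ L') (A : Set (ℕ × ℕ)) (hA : A.Nonempty)
    (hAsub : ∀ p ∈ A, p.1 ≤ L' - 1 ∧ p.2 ≤ L' - 1)
    (S : Type) (f : ℕ × ℕ → S)
    (C : (ℕ × ℕ) → (ℕ × ℕ) → S)
    (hC : ∀ p q, C p q = f (p.1 + q.1, p.2 + q.2))
    (hInj : ∀ a b : ℕ, ∀ x y : ℕ × ℕ,
      (∃ p ∈ A, ∃ q ∈ A, x = (p.1 + q.1, p.2 + q.2)) →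
      (∃ p ∈ A, ∃ q ∈ A, y = (p.1 + q.1, p.2 + q.2)) →
      a ≤ x.1 → x.1 ≤ a + L' - 1 → b ≤ x.2 → x.2 ≤ b + L' - 1 →
      a ≤ y.1 → y.1 ≤ a + L' - 1 → b ≤ y.2 → y.2 ≤ b + L' - 1 →
      f x = f y → x = y) :
    (∀ p p' q, p ∈ A → p' ∈ A → q ∈ A → p' ≠ p → C p' q ≠ C p q) ∧
    (∀ p q q', p ∈ A → q ∈ A → q' ∈ A → q' ≠ q → C p q' ≠ C p q) := by
  have key : ∀ p p' q, p ∈ A → p' ∈ A → q ∈ A →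
      C p' q = C p q → p' = p := by
    intro p p' q hp hp' hq h
    have h1 := hAsub p hp
    have h2 := hAsub p' hp'
    rw [hC, hC] at h
    have := hInj q.1 q.2 (p'.1 + q.1, p'.2 + q.2) (p.1 + q.1, p.2 + q.2)
      ⟨p', hp', q, hq, rfl⟩ ⟨p, hp, q, hq, rfl⟩
      (by dsimp only; omega) (by dsimp only; omega) (by dsimp only; omega) (by dsimp only; omega)
      (by dsimp only; omega) (by dsimp only; omega) (by dsimp only; omega) (by dsimp only; omega) h
    simp only [Prod.mk.injEq] at this
    exact Prod.ext (by omega) (by omega)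
  constructor
  · intro p p' q hp hp' hq hne h
    exact hne (key p p' q hp hp' hq h)
  · intro p q q' hp hq hq' hne h
    have : ∀ r r', C r r' = f (r'.1 + r.1, r'.2 + r.2) → True := fun _ _ _ => trivial
    have h' : C q' p = C q p := by
      rw [hC, hC] at h ⊢
      rw [Nat.add_comm q'.1, Nat.add_comm q'.2, Nat.add_comm q.1, Nat.add_comm q.2]
      exact h
    exact hne (key q q' p hq hq' hp h')
end
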